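/- arXiv:math/0106199 — 7 statements merged into one kernel-verified Lean document; each statement's English description precedes it below -/
import Mathlib

section
/- Let φ be a global smooth flow on M, μ ∈ C^∞(M,ℝ) with φ(x, μ(x)) = x for all x, and ω a non-constant trajectory of φ. If ω is non-closed (the map t ↦ φ(x,t) is injective for x ∈ ω), then μ vanishes identically on ω. If ω is periodic with minimal period θ > 0, then μ is constant on ω and equals nθ for some integer n. -/
/-- A smooth function `μ` with `φ(x, μ(x)) = x` vanishes on every non-closed
trajectory and equals an integer multiple of the minimal period on every periodic trajectory. -/
theorem kernel_function_on_trajectories {E : Type*} [NormedAddCommGroup E] [NormedSpace ℝ E]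
    (φ : E × ℝ → E) (hφ : ContDiff ℝ (⊤ : ℕ∞) φ)
    (hflow0 : ∀ x : E, φ (x, 0) = x)
    (hflowadd : ∀ (x : E) (t s : ℝ), φ (φ (x, t), s) = φ (x, t + s))
    (μ : E → ℝ) (hμsmooth : ContDiff ℝ (⊤ : ℕ∞) μ)
    (hμ : ∀ x : E, φ (x, μ x) = x) (x₀ : E) :
    (Function.Injective (fun t : ℝ => φ (x₀, t)) → ∀ t : ℝ, μ (φ (x₀, t)) = 0) ∧
    (∀ θ : ℝ, 0 < θ → φ (x₀, θ) = x₀ →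
      (∀ s : ℝ, 0 < s → s < θ → φ (x₀, s) ≠ x₀) →
      ∃ n : ℤ, ∀ t : ℝ, μ (φ (x₀, t)) = (n : ℝ) * θ) := by
  -- μ (φ (x₀, t)) is always a "period" of x₀
  have hkey : ∀ t : ℝ, φ (x₀, μ (φ (x₀, t))) = x₀ := by
    intro t
    have h := hμ (φ (x₀, t))
    rw [hflowadd] at h
    have h3 := hflowadd x₀ (t + μ (φ (x₀, t))) (-t)
    rw [h, hflowadd] at h3
    have e1 : t + -t = (0 : ℝ) := by ring
    have e2 : t + μ (φ (x₀, t)) + -t = μ (φ (x₀, t)) := by ring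
    rw [e1, e2, hflow0] at h3
    exact h3.symm
  constructor
  · intro hinj t
    have h := hμ (φ (x₀, t))
    rw [hflowadd] at h
    have := hinj (a₁ := t + μ (φ (x₀, t))) (a₂ := t) h
    linarith
  · intro θ hθ hper hmin
    -- negation of a period is a period
    have hneg : ∀ s : ℝ, φ (x₀, s) = x₀ → φ (x₀, -s) = x₀ := by
      intro s hs
      have h2 := hflowadd x₀ s (-s)
      rw [hs, add_neg_cancel, hflow0] at h2
      exact h2
    -- natural multiples of θ are periods
    have hnat : ∀ n : ℕ, φ (x₀, (n : ℝ) * θ) = x₀ := by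
      intro n
      induction n with
      | zero => simpa using hflow0 x₀
      | succ k ih =>
        have e : ((k + 1 : ℕ) : ℝ) * θ = (k : ℝ) * θ + θ := by push_cast; ring
        rw [e, ← hflowadd, ih, hper]
    -- integer multiples of θ are periods
    have hint : ∀ n : ℤ, φ (x₀, (n : ℝ) * θ) = x₀ := by
      intro n
      obtain ⟨m, rfl | rfl⟩ := Int.eq_nat_or_neg n
      · exact_mod_cast hnat m
      · have := hneg _ (hnat m)
        have e : ((-(m : ℤ) : ℤ) : ℝ) * θ = -((m : ℝ) * θ) := by push_cast; ring
        rw [e]; exact this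
    -- every period is an integer multiple of θ
    have hperiod : ∀ s : ℝ, φ (x₀, s) = x₀ → ∃ n : ℤ, s = (n : ℝ) * θ := by
      intro s hs
      set n : ℤ := ⌊s / θ⌋ with hn
      have hfl := Int.floor_le (s / θ)
      have hfu := Int.lt_floor_add_one (s / θ)
      have h1 : 0 ≤ s - (n : ℝ) * θ := by
        rw [hn]
        have := mul_le_mul_of_nonneg_right hfl hθ.le
        rw [div_mul_cancel₀ _ (ne_of_gt hθ)] at this
        linarith
      have h2 : s - (n : ℝ) * θ < θ := by
        rw [hn]
        have := mul_lt_mul_of_pos_right hfu hθ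
        rw [div_mul_cancel₀ _ (ne_of_gt hθ)] at this
        nlinarith
      have hr : φ (x₀, s - (n : ℝ) * θ) = x₀ := by
        have h3 := hflowadd x₀ s (-((n : ℝ) * θ))
        rw [hs] at h3
        have e : s + -((n : ℝ) * θ) = s - (n : ℝ) * θ := by ring
        rw [e] at h3
        have e2 : -((n : ℝ) * θ) = ((-n : ℤ) : ℝ) * θ := by push_cast; ring
        rw [e2, hint (-n)] at h3
        exact h3.symm
      rcases h1.eq_or_lt with h | h
      · exact ⟨n, by linarith⟩
      · exact absurd hr (hmin _ h h2)
    -- hence μ along the orbit takes values in θℤ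
    have hval : ∀ t : ℝ, ∃ n : ℤ, μ (φ (x₀, t)) = (n : ℝ) * θ := by
      intro t
      obtain ⟨n, hn⟩ := hperiod _ (hkey t)
      exact ⟨n, hn⟩
    have hcont : Continuous fun t : ℝ => μ (φ (x₀, t)) :=
      hμsmooth.continuous.comp (hφ.continuous.comp (Continuous.prodMk_right x₀))
    obtain ⟨n₀, hn₀⟩ := hval 0
    refine ⟨n₀, fun t => ?_⟩
    obtain ⟨n, hn⟩ := hval t
    rw [hn]
    suffices h : n = n₀ by rw [h]
    by_contra hcon
    -- use IVT to find an intermediate value not in θℤ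
    set m : ℤ := min n n₀ with hm
    set c : ℝ := (m : ℝ) * θ + θ / 2 with hc
    have hM : m + 1 ≤ max n n₀ := by
      rcases lt_or_gt_of_ne hcon with h | h
      · simp [hm, min_eq_left h.le, max_eq_right h.le]; omega
      · simp [hm, min_eq_right h.le, max_eq_left h.le]; omega
    have hmemc : c ∈ Set.uIcc ((fun t : ℝ => μ (φ (x₀, t))) 0) ((fun t : ℝ => μ (φ (x₀, t))) t) := by
      simp only [hn₀, hn]
      rw [Set.mem_uIcc]
      rcases lt_or_gt_of_ne hcon with h | h
      · -- n < n₀ : m = n, so n*θ ≤ c ≤ n₀*θ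
        right
        have h1 : (m : ℝ) = (n : ℝ) := by exact_mod_cast congrArg (Int.cast : ℤ → ℝ) (min_eq_left h.le)
        have h2 : (m : ℝ) + 1 ≤ (n₀ : ℝ) := by
          have : m + 1 ≤ n₀ := by rw [hm, min_eq_left h.le]; omega
          exact_mod_cast this
        constructor
        · rw [hc, h1]; linarith
        · rw [hc]; nlinarith
      · -- n₀ < n : m = n₀, so n₀*θ ≤ c ≤ n*θ
        left
        have h1 : (m : ℝ) = (n₀ : ℝ) := by exact_mod_cast congrArg (Int.cast : ℤ → ℝ) (min_eq_right h.le)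
        have h2 : (m : ℝ) + 1 ≤ (n : ℝ) := by
          have : m + 1 ≤ n := by rw [hm, min_eq_right h.le]; omega
          exact_mod_cast this
        constructor
        · rw [hc, h1]; linarith
        · rw [hc]; nlinarith
    obtain ⟨s, -, hsc⟩ := intermediate_value_uIcc hcont.continuousOn hmemc
    obtain ⟨k, hk⟩ := hval s
    have hkc : (k : ℝ) * θ = (m : ℝ) * θ + θ / 2 := by
      rw [← hk]; exact hsc
    have h2k : ((2 * k : ℤ) : ℝ) * θ = ((2 * m + 1 : ℤ) : ℝ) * θ := by push_cast; linarith
    have : (2 * k : ℤ) = 2 * m + 1 := by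
      have := mul_right_cancel₀ (ne_of_gt hθ) h2k
      exact_mod_cast this
    omega
end

section
/- Let φ be a smooth flow on an open set U ⊆ ℝⁿ, f ∈ C^∞(U,ℝ), h(x) = φ(x, f(x)), and z ∈ U a point with f(z) = 0. Then det(Dh(z)) = 1 + df_z(F(z)), where F(z) = ∂φ/∂t(z,0) is the flow's generating vector field. Consequently, Dh(z) is invertible if and only if df_z(F(z)) ≠ −1. -/
open Matrix in
theorem det_id_add_smulRight {n : ℕ} (φ : (Fin n → ℝ) →L[ℝ] ℝ) (w : Fin n → ℝ) :
    (ContinuousLinearMap.id ℝ (Fin n → ℝ) + φ.smulRight w).det = 1 + φ w := by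
  rw [ContinuousLinearMap.det]
  rw [← LinearMap.det_toMatrix (Pi.basisFun ℝ (Fin n))]
  have hM : LinearMap.toMatrix (Pi.basisFun ℝ (Fin n)) (Pi.basisFun ℝ (Fin n))
      ((ContinuousLinearMap.id ℝ (Fin n → ℝ) + φ.smulRight w) : (Fin n → ℝ) →ₗ[ℝ] (Fin n → ℝ))
      = 1 + replicateCol (Fin 1) w * replicateRow (Fin 1) (fun j => φ (Pi.basisFun ℝ (Fin n) j)) := by
    ext i j
    simp [LinearMap.toMatrix_apply, Matrix.one_apply, Pi.basisFun_apply, mul_comm,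
      Matrix.mul_apply, Pi.single_apply, eq_comm]
  rw [ContinuousLinearMap.coe_add] at *
  rw [hM]
  erw [det_one_add_replicateCol_mul_replicateRow (ι := Fin 1) (α := ℝ)]
  congr 1
  have : φ w = φ (∑ j, w j • Pi.basisFun ℝ (Fin n) j) := by
    congr 1
    simp [Pi.basisFun_apply, ← Pi.single_smul]
    ext i
    simp [Pi.single_apply, Finset.sum_apply]
  rw [this, map_sum]
  simp [dotProduct, mul_comm]

theorem fderiv_shift_eq {n : ℕ}
    (U : Set (Fin n → ℝ)) (hU : IsOpen U)
    (φ : (Fin n → ℝ) × ℝ → (Fin n → ℝ))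
    (hφ : ContDiffOn ℝ (⊤ : ℕ∞) φ (U ×ˢ (Set.univ : Set ℝ)))
    (hflow0 : ∀ x ∈ U, φ (x, 0) = x)
    (f : (Fin n → ℝ) → ℝ) (hf : ContDiffOn ℝ (⊤ : ℕ∞) f U)
    (h : (Fin n → ℝ) → (Fin n → ℝ)) (hh : ∀ x, h x = φ (x, f x))
    (F : (Fin n → ℝ) → (Fin n → ℝ))
    (hF : ∀ x ∈ U, F x = deriv (fun t : ℝ => φ (x, t)) 0)
    (z : Fin n → ℝ) (hz : z ∈ U) (hfz : f z = 0) :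
    fderiv ℝ h z = ContinuousLinearMap.id ℝ (Fin n → ℝ) + (fderiv ℝ f z).smulRight (F z) := by
  have hUo : IsOpen (U ×ˢ (Set.univ : Set ℝ)) := hU.prod isOpen_univ
  have hmem : (z, (0:ℝ)) ∈ U ×ˢ (Set.univ : Set ℝ) := ⟨hz, trivial⟩
  have hφd : DifferentiableAt ℝ φ (z, 0) := by
    have := (hφ.contDiffAt (hUo.mem_nhds hmem)).differentiableAt (by norm_num)
    exact this
  have hfd : DifferentiableAt ℝ f z :=
    (hf.contDiffAt (hU.mem_nhds hz)).differentiableAt (by norm_num)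
  have hgd : DifferentiableAt ℝ (fun x => (x, f x)) z :=
    (differentiableAt_fun_id).prodMk hfd
  have hcomp : fderiv ℝ h z = (fderiv ℝ φ (z, 0)).comp (fderiv ℝ (fun x => (x, f x)) z) := by
    have : h = φ ∘ (fun x => (x, f x)) := funext fun x => hh x
    rw [this, fderiv_comp z (by simp only [hfz]; exact hφd) hgd]
    simp [hfz]
  have hg : fderiv ℝ (fun x : Fin n → ℝ => (x, f x)) z
      = (ContinuousLinearMap.id ℝ (Fin n → ℝ)).prod (fderiv ℝ f z) := by
    rw [DifferentiableAt.fderiv_prodMk differentiableAt_fun_id hfd, fderiv_id']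
  have hx : (fderiv ℝ φ (z, 0)).comp (ContinuousLinearMap.inl ℝ (Fin n → ℝ) ℝ)
      = ContinuousLinearMap.id ℝ (Fin n → ℝ) := by
    have h1 : fderiv ℝ (fun x : Fin n → ℝ => φ (x, 0)) z
        = (fderiv ℝ φ (z, 0)).comp (ContinuousLinearMap.inl ℝ (Fin n → ℝ) ℝ) := by
      have : (fun x : Fin n → ℝ => φ (x, 0)) = φ ∘ (fun x => (x, (0:ℝ))) := rfl
      rw [this, fderiv_comp z hφd ((differentiableAt_fun_id).prodMk (differentiableAt_const _))]
      congr 1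
      rw [DifferentiableAt.fderiv_prodMk differentiableAt_fun_id (differentiableAt_const _),
        fderiv_id', fderiv_fun_const]
      ext v i <;> simp
    have h2 : fderiv ℝ (fun x : Fin n → ℝ => φ (x, 0)) z = ContinuousLinearMap.id ℝ _ := by
      have : (fun x : Fin n → ℝ => φ (x, 0)) =ᶠ[nhds z] id := by
        filter_upwards [hU.mem_nhds hz] with x hx using hflow0 x hx
      rw [this.fderiv_eq, fderiv_id]
    rw [← h1, h2]
  have ht : fderiv ℝ φ (z, 0) (0, 1) = F z := by
    have h1 : deriv (fun t : ℝ => φ (z, t)) 0 = fderiv ℝ φ (z, 0) (0, 1) := by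
      have : (fun t : ℝ => φ (z, t)) = φ ∘ (fun t : ℝ => ((z : Fin n → ℝ), t)) := rfl
      rw [deriv]
      rw [show fderiv ℝ (fun t : ℝ => φ (z, t)) 0
        = (fderiv ℝ φ (z, 0)).comp (fderiv ℝ (fun t : ℝ => ((z : Fin n → ℝ), t)) 0) by
          rw [this, fderiv_comp 0 hφd ((differentiableAt_const _).prodMk differentiableAt_fun_id)]]
      rw [DifferentiableAt.fderiv_prodMk (differentiableAt_const _) differentiableAt_fun_id,
        fderiv_fun_const, fderiv_id']
      simp
    rw [hF z hz, h1]
  ext v i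
  rw [hcomp, hg]
  have : ((ContinuousLinearMap.id ℝ (Fin n → ℝ)).prod (fderiv ℝ f z)) v
      = (v, (0:ℝ)) + (fderiv ℝ f z v) • ((0 : Fin n → ℝ), (1:ℝ)) := by
    simp
  simp only [ContinuousLinearMap.comp_apply, this, map_add, map_smul]
  have hxv : fderiv ℝ φ (z, 0) (v, 0) = v := by
    have := congrArg (fun (L : (Fin n → ℝ) →L[ℝ] (Fin n → ℝ)) => L v) hx
    simpa using this
  simp [hxv, ht]

/-- For the shift `h(x) = φ(x, f(x))` of a smooth flow on an open `U ⊆ ℝⁿ` and a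
point `z` with `f(z) = 0`, one has `det Dh(z) = 1 + df_z(F(z))`; consequently `Dh(z)` is
invertible iff `df_z(F(z)) ≠ -1`. -/
theorem det_shift_derivative {n : ℕ}
    (U : Set (Fin n → ℝ)) (hU : IsOpen U)
    (φ : (Fin n → ℝ) × ℝ → (Fin n → ℝ))
    (hφ : ContDiffOn ℝ (⊤ : ℕ∞) φ (U ×ˢ (Set.univ : Set ℝ)))
    (hUinv : ∀ x ∈ U, ∀ t : ℝ, φ (x, t) ∈ U)
    (hflow0 : ∀ x ∈ U, φ (x, 0) = x)
    (hflowadd : ∀ x ∈ U, ∀ t s : ℝ, φ (φ (x, t), s) = φ (x, t + s))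
    (f : (Fin n → ℝ) → ℝ) (hf : ContDiffOn ℝ (⊤ : ℕ∞) f U)
    (h : (Fin n → ℝ) → (Fin n → ℝ)) (hh : ∀ x, h x = φ (x, f x))
    (F : (Fin n → ℝ) → (Fin n → ℝ))
    (hF : ∀ x ∈ U, F x = deriv (fun t : ℝ => φ (x, t)) 0)
    (z : Fin n → ℝ) (hz : z ∈ U) (hfz : f z = 0) :
    (fderivWithin ℝ h U z).det = 1 + fderivWithin ℝ f U z (F z) ∧
    (Function.Bijective (fderivWithin ℝ h U z) ↔
      fderivWithin ℝ f U z (F z) ≠ -1) := by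
  have hhw : fderivWithin ℝ h U z = fderiv ℝ h z := fderivWithin_of_isOpen hU hz
  have hfw : fderivWithin ℝ f U z = fderiv ℝ f z := fderivWithin_of_isOpen hU hz
  have hD := fderiv_shift_eq U hU φ hφ hflow0 f hf h hh F hF z hz hfz
  rw [hhw, hfw, hD]
  set d := fderiv ℝ f z (F z) with hd
  have hdet : (ContinuousLinearMap.id ℝ (Fin n → ℝ) + (fderiv ℝ f z).smulRight (F z)).det
      = 1 + d := det_id_add_smulRight _ _
  refine ⟨hdet, ?_⟩
  set T := ContinuousLinearMap.id ℝ (Fin n → ℝ) + (fderiv ℝ f z).smulRight (F z) with hT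
  have hiff : Function.Bijective T ↔ T.det ≠ 0 := by
    constructor
    · intro hb
      intro h0
      have hlt := LinearMap.range_lt_top_of_det_eq_zero
        (f := (T : (Fin n → ℝ) →ₗ[ℝ] (Fin n → ℝ))) h0
      have : LinearMap.range (T : (Fin n → ℝ) →ₗ[ℝ] (Fin n → ℝ)) = ⊤ :=
        LinearMap.range_eq_top.mpr hb.2
      rw [this] at hlt
      exact lt_irrefl _ hlt
    · intro hne
      have hne' : LinearMap.det (T : (Fin n → ℝ) →ₗ[ℝ] (Fin n → ℝ)) ≠ 0 := hne
      exact (LinearMap.equivOfDetNeZero (T : (Fin n → ℝ) →ₗ[ℝ] (Fin n → ℝ)) hne').bijective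
  rw [hiff, hdet]
  constructor
  · intro hne hcon
    exact hne (by rw [hcon]; ring)
  · intro hne hcon
    apply hne
    linarith
end

section
/- Let φ be a global smooth flow on a manifold M generated by the vector field F, let f ∈ C^∞(M,ℝ) and h(x) = φ(x, f(x)). If h is a diffeomorphism of M, then either df_x(F(x)) > −1 for all x ∈ M, or df_x(F(x)) < −1 for all x ∈ M; that is, the function x ↦ df_x(F(x)) + 1 has constant sign and never vanishes on M. -/
/-- If the shift `h(x) = φ(x, f(x))` of a global smooth flow on a connected
manifold is a diffeomorphism, then `x ↦ df_x(F(x)) + 1` has constant sign: either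
`df_x(F(x)) > -1` everywhere or `df_x(F(x)) < -1` everywhere. -/
theorem shift_diffeo_constant_sign {E : Type*} [NormedAddCommGroup E] [NormedSpace ℝ E]
    (φ : E × ℝ → E) (hφ : ContDiff ℝ (⊤ : ℕ∞) φ)
    (hflow0 : ∀ x : E, φ (x, 0) = x)
    (hflowadd : ∀ (x : E) (t s : ℝ), φ (φ (x, t), s) = φ (x, t + s))
    (f : E → ℝ) (hf : ContDiff ℝ (⊤ : ℕ∞) f)
    (h : E → E) (hh : h = fun x => φ (x, f x))
    (hinv : E → E) (hinvsmooth : ContDiff ℝ (⊤ : ℕ∞) hinv)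
    (hli : Function.LeftInverse hinv h) (hri : Function.RightInverse hinv h)
    (F : E → E) (hF : ∀ x : E, F x = deriv (fun t : ℝ => φ (x, t)) 0) :
    (∀ x : E, -1 < fderiv ℝ f x (F x)) ∨ (∀ x : E, fderiv ℝ f x (F x) < -1) := by
  have hφd : Differentiable ℝ φ := hφ.differentiable (by simp)
  have hfd : Differentiable ℝ f := hf.differentiable (by simp)
  have hinvd : Differentiable ℝ hinv := hinvsmooth.differentiable (by simp)
  -- `F x` is the derivative of `s ↦ φ (x, s)` at `0`
  have hFx : ∀ x, HasDerivAt (fun s : ℝ => φ (x, s)) (F x) 0 := by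
    intro x
    have hdiff : DifferentiableAt ℝ (fun s : ℝ => φ (x, s)) 0 := by
      have hin : DifferentiableAt ℝ (fun s : ℝ => ((x, s) : E × ℝ)) 0 :=
        (differentiableAt_const x).prodMk differentiableAt_id
      exact (hφd (x, 0)).comp 0 hin
    exact (hF x) ▸ hdiff.hasDerivAt
  -- `F x = fderiv φ (x,0) (0,1)`
  have hFform : ∀ x, F x = fderiv ℝ φ (x, 0) (0, 1) := by
    intro x
    have hin : HasDerivAt (fun s : ℝ => ((x, s) : E × ℝ)) ((0, 1) : E × ℝ) 0 :=
      (hasDerivAt_const 0 x).prodMk (hasDerivAt_id 0)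
    have h2 := (hφd (x, 0)).hasFDerivAt.comp_hasDerivAt 0 hin
    exact (hFx x).unique h2
  -- key pointwise fact
  have key : ∀ x, fderiv ℝ f x (F x) ≠ -1 := by
    intro x hx
    set A := fderiv ℝ φ (x, f x) with hA
    -- the derivative of φ in the flow direction
    have hb : A (F x, 0) = A (0, 1) := by
      have hg1 : HasDerivAt (fun s : ℝ => φ (φ (x, s), f x)) (A (F x, 0)) 0 := by
        have hin : HasDerivAt (fun s : ℝ => ((φ (x, s), f x) : E × ℝ)) ((F x, 0) : E × ℝ) 0 :=
          (hFx x).prodMk (hasDerivAt_const 0 (f x))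
        have h2 := (hφd (φ (x, 0), f x)).hasFDerivAt.comp_hasDerivAt 0 hin
        rw [hflow0 x] at h2
        exact h2
      have hg2 : HasDerivAt (fun s : ℝ => φ (x, s + f x)) (A (0, 1)) 0 := by
        have hin : HasDerivAt (fun s : ℝ => ((x, s + f x) : E × ℝ)) ((0, 1) : E × ℝ) 0 :=
          (hasDerivAt_const 0 x).prodMk ((hasDerivAt_id 0).add_const (f x))
        have h2 := (hφd (x, 0 + f x)).hasFDerivAt.comp_hasDerivAt 0 hin
        rw [zero_add] at h2
        exact h2
      have heq : (fun s : ℝ => φ (φ (x, s), f x)) = fun s : ℝ => φ (x, s + f x) := by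
        funext s; exact hflowadd x s (f x)
      rw [heq] at hg1
      exact hg1.unique hg2
    -- the derivative of h at x
    have hDh : HasFDerivAt h (A.comp ((ContinuousLinearMap.id ℝ E).prod (fderiv ℝ f x))) x := by
      have hin : HasFDerivAt (fun y : E => ((y, f y) : E × ℝ))
          ((ContinuousLinearMap.id ℝ E).prod (fderiv ℝ f x)) x :=
        (hasFDerivAt_id x).prodMk (hfd x).hasFDerivAt
      have h2 := (hφd (x, f x)).hasFDerivAt.comp x hin
      rw [hh]
      exact h2
    -- Dh x (F x) = 0
    have hzero : A (F x, fderiv ℝ f x (F x)) = 0 := by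
      have hv : ((F x, fderiv ℝ f x (F x)) : E × ℝ) = ((F x, 0) : E × ℝ) - (0, 1) := by
        rw [hx]; simp [Prod.ext_iff]
      rw [hv, map_sub, hb, sub_self]
    -- the derivative of hinv ∘ h = id is the identity, so F x = 0
    have hB := ((hinvd (h x)).hasFDerivAt.comp x hDh)
    have hid : HasFDerivAt (hinv ∘ h) (ContinuousLinearMap.id ℝ E) x := by
      have hcompid : hinv ∘ h = id := funext hli
      rw [hcompid]
      exact hasFDerivAt_id x
    have hcomp := hB.unique hid
    have hF0 : F x = 0 := by
      have h3 := congrArg (fun (L : E →L[ℝ] E) => L (F x)) hcomp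
      simp only [ContinuousLinearMap.comp_apply, ContinuousLinearMap.prod_apply,
        ContinuousLinearMap.id_apply] at h3
      rw [hzero, map_zero] at h3
      exact h3.symm
    rw [hF0] at hx
    simp at hx
  -- continuity of x ↦ df_x(F x)
  have hcont : Continuous fun x : E => fderiv ℝ f x (F x) := by
    have h1 : Continuous fun x : E => fderiv ℝ f x := hf.continuous_fderiv (by simp)
    have h2 : Continuous F := by
      have h3 : Continuous fun x : E => fderiv ℝ φ (x, 0) :=
        (hφ.continuous_fderiv (by simp)).comp (continuous_id.prodMk continuous_const)
      have h4 : Continuous fun x : E => fderiv ℝ φ (x, 0) (0, 1) := h3.clm_apply continuous_const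
      have h5 : F = fun x : E => fderiv ℝ φ (x, 0) (0, 1) := funext hFform
      rw [h5]; exact h4
    exact h1.clm_apply h2
  -- conclude by the intermediate value theorem
  by_contra hcon
  push_neg at hcon
  obtain ⟨⟨a, ha⟩, ⟨b, hb⟩⟩ := hcon
  obtain ⟨z, hz⟩ := intermediate_value_univ a b hcont ⟨ha, hb⟩
  exact key z hz
end

section
/- Let h : ℝⁿ → ℝⁿ be a C¹-diffeomorphism with h(0) = 0, let A = Dh(0) be its derivative at 0, and let b : ℝⁿ → ℝ be a continuous function that is positively homogeneous of degree k (b(t x) = t^k b(x) for all t > 0). If b ∘ h = b, then b ∘ A = b. -/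
/-!
Rescaling `h` by `t⁻¹ • h (t • ·)` leaves `b` invariant for every `t > 0`, by homogeneity and
`b ∘ h = b`; as `t → 0⁺` these rescalings converge pointwise to `Dh(0)`, so continuity of `b`
passes the invariance to the limit.
-/

open Filter Topology

theorem HasFDerivAt.tendsto_inv_smul_apply_smul {E F : Type*}
    [NormedAddCommGroup E] [NormedSpace ℝ E] [NormedAddCommGroup F] [NormedSpace ℝ F]
    {f : E → F} {f' : E →L[ℝ] F} (hf : HasFDerivAt f f' 0) (hf0 : f 0 = 0) (x : E) :
    Tendsto (fun t : ℝ => t⁻¹ • f (t • x)) (𝓝[≠] 0) (𝓝 (f' x)) := by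
  have hline : HasDerivAt (fun t : ℝ => t • x) x 0 := by
    simpa using (hasDerivAt_id (0 : ℝ)).smul_const x
  have hcomp : HasDerivAt (fun t : ℝ => f (t • x)) (f' x) 0 :=
    (zero_smul ℝ x ▸ hf).comp_hasDerivAt (0 : ℝ) hline
  refine hcomp.tendsto_slope.congr fun t => ?_
  simp [slope, hf0]

theorem apply_inv_smul_apply_smul_eq_of_homogeneous {E : Type*} [AddCommGroup E] [Module ℝ E]
    {b : E → ℝ} {k : ℕ} (hhom : ∀ t : ℝ, 0 < t → ∀ x, b (t • x) = t ^ k * b x)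
    {h : E → E} (hbh : ∀ x, b (h x) = b x) {t : ℝ} (ht : 0 < t) (x : E) :
    b (t⁻¹ • h (t • x)) = b x := by
  rw [hhom t⁻¹ (inv_pos.mpr ht), hbh, hhom t ht, ← mul_assoc, ← mul_pow,
    inv_mul_cancel₀ ht.ne', one_pow, one_mul]

theorem homogeneous_invariant_linearization_general {n : ℕ}
    (h : (Fin n → ℝ) → (Fin n → ℝ)) (hC1 : ContDiff ℝ 1 h)
    (h0 : h 0 = 0)
    (k : ℕ) (b : (Fin n → ℝ) → ℝ) (hb : Continuous b)
    (hhom : ∀ t : ℝ, 0 < t → ∀ x, b (t • x) = t ^ k * b x)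
    (hbh : ∀ x, b (h x) = b x) :
    ∀ x, b (fderiv ℝ h 0 x) = b x := by
  intro x
  have hlim : Tendsto (fun t : ℝ => b (t⁻¹ • h (t • x))) (𝓝[>] 0) (𝓝 (b (fderiv ℝ h 0 x))) :=
    hb.continuousAt.tendsto.comp <|
      ((hC1.differentiable one_ne_zero 0).hasFDerivAt.tendsto_inv_smul_apply_smul h0 x).mono_left
        (nhdsGT_le_nhdsNE 0)
  have hconst : (fun t : ℝ => b (t⁻¹ • h (t • x))) =ᶠ[𝓝[>] 0] fun _ => b x :=
    eventually_mem_nhdsWithin.mono fun t ht =>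
      apply_inv_smul_apply_smul_eq_of_homogeneous hhom hbh ht x
  exact tendsto_nhds_unique (hlim.congr' hconst) tendsto_const_nhds

/-- If `h : ℝⁿ → ℝⁿ` is a `C¹`-diffeomorphism with `h(0) = 0`, `A = Dh(0)`,
and `b` is a continuous positively homogeneous function of degree `k` with `b ∘ h = b`,
then `b ∘ A = b`. -/
theorem homogeneous_invariant_linearization {n : ℕ}
    (h : (Fin n → ℝ) → (Fin n → ℝ)) (hC1 : ContDiff ℝ 1 h)
    (hinv : (Fin n → ℝ) → (Fin n → ℝ)) (hinvC1 : ContDiff ℝ 1 hinv)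
    (hli : Function.LeftInverse hinv h) (hri : Function.RightInverse hinv h)
    (h0 : h 0 = 0)
    (k : ℕ) (b : (Fin n → ℝ) → ℝ) (hb : Continuous b)
    (hhom : ∀ t : ℝ, 0 < t → ∀ x, b (t • x) = t ^ k * b x)
    (hbh : ∀ x, b (h x) = b x) :
    ∀ x, b (fderiv ℝ h 0 x) = b x :=
  homogeneous_invariant_linearization_general h hC1 h0 k b hb hhom hbh
end

section
/- Let ε : ℂ → ℂ be a C^∞ function with ε(z) = o(|z|^k) as z → 0 (for some k ≥ 2, together with its Taylor expansion vanishing to order k at 0). Define τ(z) = ε(z)/z for z ≠ 0 and τ(0) = 0. Then τ is of class C^{k−2}. -/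
open Asymptotics Topology Filter Set

namespace QuotByZ

lemma pow_bigO {a b : ℕ} (h : b ≤ a) :
    (fun z : ℂ => ‖z‖ ^ a) =O[𝓝 0] fun z : ℂ => ‖z‖ ^ b := by
  rw [isBigO_iff]
  refine ⟨1, ?_⟩
  have h1 : ∀ᶠ z : ℂ in 𝓝 0, ‖z‖ ≤ 1 := by
    filter_upwards [Metric.ball_mem_nhds (0 : ℂ) one_pos] with z hz
    rw [Metric.mem_ball, dist_eq_norm, sub_zero] at hz; exact hz.le
  filter_upwards [h1] with z hz
  have := pow_le_pow_of_le_one (norm_nonneg z) hz h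
  simpa [abs_of_nonneg (pow_nonneg (norm_nonneg z) _)] using this

lemma o_mono {u : ℂ → ℝ} {a b : ℕ} (h : b ≤ a)
    (hu : u =o[𝓝 0] fun z : ℂ => ‖z‖ ^ a) : u =o[𝓝 0] fun z : ℂ => ‖z‖ ^ b :=
  hu.trans_isBigO (pow_bigO h)

lemma o_tendsto {E : Type} [NormedAddCommGroup E] {g : ℂ → E} {d : ℕ}
    (h : (fun z => ‖g z‖) =o[𝓝 0] fun z : ℂ => ‖z‖ ^ d) :
    Tendsto g (𝓝 0) (𝓝 0) := by
  have h0 : (fun z => ‖g z‖) =o[𝓝 0] fun _ : ℂ => (1 : ℝ) := by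
    simpa using o_mono (Nat.zero_le d) h
  rw [tendsto_zero_iff_norm_tendsto_zero]
  exact isLittleO_one_iff ℝ |>.1 h0

lemma div_o {E : Type} [NormedAddCommGroup E] [NormedSpace ℂ E] {f : ℂ → E} {p : ℕ}
    (hp : 1 ≤ p) (h : (fun z => ‖f z‖) =o[𝓝 0] fun z : ℂ => ‖z‖ ^ p) :
    (fun z => ‖z⁻¹ • f z‖) =o[𝓝 0] fun z : ℂ => ‖z‖ ^ (p - 1) := by
  rw [isLittleO_iff] at h ⊢
  intro c hc
  filter_upwards [h hc] with z hz
  rcases eq_or_ne z 0 with rfl | hz0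
  · simp [abs_of_nonneg (pow_nonneg (norm_nonneg (0:ℂ)) _)]
    positivity
  · have hzn : (0 : ℝ) < ‖z‖ := norm_pos_iff.2 hz0
    have hzp : ‖z‖ ^ p = ‖z‖ ^ (p - 1) * ‖z‖ := by
      conv_lhs => rw [← Nat.sub_add_cancel hp]
      rw [pow_succ]
    rw [Real.norm_of_nonneg (norm_nonneg _), Real.norm_of_nonneg (pow_nonneg (norm_nonneg z) _)]
    rw [Real.norm_of_nonneg (norm_nonneg _), Real.norm_of_nonneg (pow_nonneg (norm_nonneg z) _)] at hz
    rw [norm_smul, norm_inv]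
    rw [hzp] at hz
    calc ‖z‖⁻¹ * ‖f z‖ ≤ ‖z‖⁻¹ * (c * (‖z‖ ^ (p - 1) * ‖z‖)) := by
          exact mul_le_mul_of_nonneg_left hz (by positivity)
      _ = c * ‖z‖ ^ (p - 1) := by
          have he : ‖z‖⁻¹ * (c * (‖z‖ ^ (p - 1) * ‖z‖)) = c * ‖z‖ ^ (p - 1) * (‖z‖⁻¹ * ‖z‖) := by
            ring
          rw [he, inv_mul_cancel₀ hzn.ne', mul_one]

lemma o_step_down {E : Type} [NormedAddCommGroup E] [NormedSpace ℝ E] {f : ℂ → E}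
    (hd : Differentiable ℝ f) (h0 : f 0 = 0) {m : ℕ}
    (h : (fun z => ‖fderiv ℝ f z‖) =o[𝓝 0] fun z : ℂ => ‖z‖ ^ m) :
    (fun z => ‖f z‖) =o[𝓝 0] fun z : ℂ => ‖z‖ ^ (m + 1) := by
  rw [isLittleO_iff] at h ⊢
  intro c hc
  obtain ⟨δ, hδ, hball⟩ := Metric.eventually_nhds_iff.1 (h hc)
  refine Metric.eventually_nhds_iff.2 ⟨δ, hδ, fun z hz => ?_⟩
  have key : ‖f z - f 0‖ ≤ c * ‖z‖ ^ m * ‖z - 0‖ := by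
    refine (convex_closedBall (0:ℂ) ‖z‖).norm_image_sub_le_of_norm_fderiv_le
      (fun w _ => hd.differentiableAt) (fun w hw => ?_) ?_ ?_
    · have hwz : ‖w‖ ≤ ‖z‖ := by simpa [Metric.mem_closedBall, dist_eq_norm] using hw
      have hwδ : dist w 0 < δ := by
        simp only [dist_eq_norm, sub_zero] at hz ⊢
        exact lt_of_le_of_lt hwz hz
      have := hball hwδ
      rw [Real.norm_of_nonneg (norm_nonneg _),
        Real.norm_of_nonneg (pow_nonneg (norm_nonneg w) _)] at this
      refine this.trans ?_
      exact mul_le_mul_of_nonneg_left (pow_le_pow_left₀ (norm_nonneg w) hwz m) hc.le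
    · simpa [Metric.mem_closedBall] using norm_nonneg z
    · simp [Metric.mem_closedBall]
  rw [h0, sub_zero, sub_zero] at key
  rw [Real.norm_of_nonneg (norm_nonneg _), Real.norm_of_nonneg (pow_nonneg (norm_nonneg z) _)]
  calc ‖f z‖ ≤ c * ‖z‖ ^ m * ‖z‖ := key
    _ = c * ‖z‖ ^ (m + 1) := by rw [pow_succ]; ring

lemma o_vanishing {E : Type} [NormedAddCommGroup E] [NormedSpace ℝ E] {f : ℂ → E}
    (hf : ContDiff ℝ (⊤ : ℕ∞) f) (k : ℕ) (hvan : ∀ j, j ≤ k → iteratedFDeriv ℝ j f 0 = 0) :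
    ∀ j, j ≤ k → (fun z => ‖iteratedFDeriv ℝ j f z‖) =o[𝓝 0] fun z : ℂ => ‖z‖ ^ (k - j) := by
  suffices H : ∀ d j, j + d ≤ k →
      (fun z => ‖iteratedFDeriv ℝ j f z‖) =o[𝓝 0] fun z : ℂ => ‖z‖ ^ d by
    intro j hj
    exact H (k - j) j (by omega)
  intro d
  induction d with
  | zero =>
    intro j hj
    have hcont : Continuous fun z : ℂ => iteratedFDeriv ℝ j f z :=
      hf.continuous_iteratedFDeriv (by exact (by exact_mod_cast le_top))
    have ht : Tendsto (fun z : ℂ => ‖iteratedFDeriv ℝ j f z‖) (𝓝 0) (𝓝 0) := by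
      have : Tendsto (fun z : ℂ => iteratedFDeriv ℝ j f z) (𝓝 0) (𝓝 0) := by
        have := hcont.tendsto 0
        rwa [hvan j (by omega)] at this
      simpa using this.norm
    simpa using (isLittleO_one_iff ℝ).2 ht
  | succ d ih =>
    intro j hj
    have hdiff : Differentiable ℝ fun z : ℂ => iteratedFDeriv ℝ j f z :=
      hf.differentiable_iteratedFDeriv (by exact_mod_cast lt_top_iff_ne_top.2 (by simp))
    have hder : (fun z => ‖fderiv ℝ (iteratedFDeriv ℝ j f) z‖) =o[𝓝 0]
        fun z : ℂ => ‖z‖ ^ d := by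
      have h1 := ih (j + 1) (by omega)
      have h2 : ∀ z : ℂ, ‖fderiv ℝ (iteratedFDeriv ℝ j f) z‖ = ‖iteratedFDeriv ℝ (j+1) f z‖ :=
        fun z => norm_fderiv_iteratedFDeriv
      simp only [h2]
      exact h1
    have := o_step_down hdiff (hvan j (by omega)) hder
    exact this


noncomputable def L (E : Type) [NormedAddCommGroup E] [NormedSpace ℂ E] :
    E →L[ℝ] (ℂ →L[ℝ] E) :=
  LinearMap.mkContinuous
    { toFun := fun e => (ContinuousLinearMap.id ℝ ℂ).smulRight e
      map_add' := fun e₁ e₂ => by ext v; simp [smul_add]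
      map_smul' := fun r e => by
        ext v
        simp only [ContinuousLinearMap.smulRight_apply, ContinuousLinearMap.coe_id', id_eq,
          RingHom.id_apply, ContinuousLinearMap.coe_smul', Pi.smul_apply]
        exact smul_comm v r e }
    1 (fun e => by
      refine ContinuousLinearMap.opNorm_le_bound _ (by positivity) fun v => ?_
      simp only [LinearMap.coe_mk, AddHom.coe_mk, ContinuousLinearMap.smulRight_apply,
        ContinuousLinearMap.coe_id', id_eq, one_mul]
      rw [norm_smul]
      exact le_of_eq (mul_comm _ _))

@[simp] lemma L_apply (E : Type) [NormedAddCommGroup E] [NormedSpace ℂ E] (e : E) (v : ℂ) :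
    L E e v = v • e := rfl


open ContinuousLinearMap in
lemma main_div : ∀ (n : ℕ) (E : Type) [NormedAddCommGroup E] [NormedSpace ℂ E]
    (p : ℕ), n + 1 ≤ p → ∀ f : ℂ → E, ContDiff ℝ n f →
    (∀ j, j ≤ n → (fun z => ‖iteratedFDeriv ℝ j f z‖) =o[𝓝 0] fun z : ℂ => ‖z‖ ^ (p - j)) →
    ContDiff ℝ n (fun z : ℂ => z⁻¹ • f z) ∧
      ∀ j, j ≤ n → (fun z => ‖iteratedFDeriv ℝ j (fun w : ℂ => w⁻¹ • f w) z‖) =o[𝓝 0]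
        fun z : ℂ => ‖z‖ ^ (p - 1 - j) := by
  intro n
  induction n with
  | zero =>
    intro E _ _ p hp f hcd ho
    have h0 := ho 0 le_rfl
    simp only [norm_iteratedFDeriv_zero, Nat.sub_zero] at h0
    have hgo : (fun z => ‖(z : ℂ)⁻¹ • f z‖) =o[𝓝 0] fun z : ℂ => ‖z‖ ^ (p - 1) := div_o hp h0
    constructor
    · rw [show ((0:ℕ) : WithTop ℕ∞) = 0 by norm_cast, contDiff_zero, continuous_iff_continuousAt]
      intro z
      rcases eq_or_ne z 0 with rfl | hz
      · have ht : Tendsto (fun z : ℂ => z⁻¹ • f z) (𝓝 0) (𝓝 0) := o_tendsto hgo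
        unfold ContinuousAt
        simpa [inv_zero, zero_smul] using ht
      · exact (continuousAt_inv₀ hz).smul (hcd.continuous.continuousAt)
    · intro j hj
      obtain rfl : j = 0 := by omega
      simpa [norm_iteratedFDeriv_zero] using hgo
  | succ n ih =>
    intro E _ _ p hp f hcd ho
    have hcdn : ContDiff ℝ n f := hcd.of_le (by exact_mod_cast Nat.le_succ n)
    obtain ⟨hg_cd, hg_o⟩ := ih E p (by omega) f hcdn (fun j hj => ho j (by omega))
    obtain ⟨hg2_cd, hg2_o⟩ := ih E (p - 1) (by omega) (fun z : ℂ => z⁻¹ • f z) hg_cd hg_o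
    have hdf_cd : ContDiff ℝ n (fun z : ℂ => fderiv ℝ f z) := by
      apply hcd.fderiv_right
      norm_cast
    have hdf_o : ∀ j, j ≤ n → (fun z => ‖iteratedFDeriv ℝ j (fun w : ℂ => fderiv ℝ f w) z‖)
        =o[𝓝 0] fun z : ℂ => ‖z‖ ^ (p - 1 - j) := by
      intro j hj
      have h1 := ho (j + 1) (by omega)
      have h2 : ∀ z : ℂ, ‖iteratedFDeriv ℝ j (fderiv ℝ f) z‖ = ‖iteratedFDeriv ℝ (j+1) f z‖ :=
        fun z => norm_iteratedFDeriv_fderiv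
      have h3 : p - 1 - j = p - (j + 1) := by omega
      rw [h3]
      simp only [h2]
      exact h1
    obtain ⟨hh_cd, hh_o⟩ := ih (ℂ →L[ℝ] E) (p - 1) (by omega) (fun z : ℂ => fderiv ℝ f z)
      hdf_cd hdf_o
    -- the candidate derivative
    set F : ℂ → (ℂ →L[ℝ] E) := (fun z : ℂ => z⁻¹ • (fun w : ℂ => fderiv ℝ f w) z)
      + (⇑(-(L E)) ∘ fun z : ℂ => z⁻¹ • (fun w : ℂ => w⁻¹ • f w) z) with hFdef
    have hF_cd : ContDiff ℝ n F := hh_cd.add (((-(L E)).contDiff).comp hg2_cd)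
    have hF0 : F 0 = 0 := by
      simp [hFdef, Function.comp, inv_zero, zero_smul, map_zero]
    have hfd : ∀ z : ℂ, HasFDerivAt (fun w : ℂ => w⁻¹ • f w) (F z) z := by
      intro z
      rcases eq_or_ne z 0 with rfl | hz
      · rw [hF0]
        rw [hasFDerivAt_iff_isLittleO_nhds_zero]
        have h0pre : (fun z : ℂ => ‖(z:ℂ)⁻¹ • f z‖) =o[𝓝 0] fun z : ℂ => ‖z‖ ^ (p - 1) := by
          simpa [norm_iteratedFDeriv_zero] using hg_o 0 (Nat.zero_le n)
        have h0 : (fun z : ℂ => ‖(z:ℂ)⁻¹ • f z‖) =o[𝓝 0] fun z : ℂ => ‖z‖ ^ 1 :=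
          o_mono (by omega) h0pre
        have h0' : (fun z : ℂ => (z:ℂ)⁻¹ • f z) =o[𝓝 0] fun z : ℂ => z := by
          rw [← isLittleO_norm_norm]
          simpa [pow_one] using h0
        simpa [inv_zero, zero_smul, zero_add, sub_zero] using h0'
      · have h1 : HasFDerivAt (fun w : ℂ => w⁻¹)
            ((ContinuousLinearMap.smulRight (1 : ℂ →L[ℂ] ℂ) (-(z^2)⁻¹)).restrictScalars ℝ) z :=
          ((hasDerivAt_inv hz).hasFDerivAt).restrictScalars ℝ
        have h2 : HasFDerivAt f (fderiv ℝ f z) z :=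
          (hcd.differentiable (by norm_cast) z).hasFDerivAt
        have h3 := h1.smul h2
        refine h3.congr_fderiv ?_
        ext v
        simp only [hFdef, Pi.add_apply, Function.comp_apply, ContinuousLinearMap.add_apply,
          ContinuousLinearMap.coe_smul', Pi.smul_apply, ContinuousLinearMap.smulRight_apply,
          ContinuousLinearMap.coe_restrictScalars', ContinuousLinearMap.one_apply,
          ContinuousLinearMap.neg_apply, L_apply, smul_eq_mul]
        rw [smul_smul, smul_smul, ← neg_smul]
        congr 1
        field_simp
    have hdiff : Differentiable ℝ (fun w : ℂ => w⁻¹ • f w) := fun z => (hfd z).differentiableAt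
    have hfderiv : (fderiv ℝ fun w : ℂ => w⁻¹ • f w) = F := funext fun z => (hfd z).fderiv
    have hg_cd' : ContDiff ℝ ((n : ℕ) + 1 : ℕ) (fun w : ℂ => w⁻¹ • f w) := by
      rw [show (((n + 1 : ℕ)) : WithTop ℕ∞) = (n : WithTop ℕ∞) + 1 by norm_cast]
      rw [contDiff_succ_iff_fderiv]
      refine ⟨hdiff, ?_, ?_⟩
      · intro hbad; exact absurd hbad (by simp)
      · rw [hfderiv]; exact hF_cd
    refine ⟨hg_cd', ?_⟩
    intro j hj
    rcases Nat.lt_or_ge j (n + 1) with hlt | hge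
    · exact hg_o j (by omega)
    obtain rfl : j = n + 1 := by omega
    have hMg2_cd : ContDiff ℝ n (⇑(-(L E)) ∘ fun z : ℂ => z⁻¹ • (fun w : ℂ => w⁻¹ • f w) z) :=
      ((-(L E)).contDiff).comp hg2_cd
    have hb : ∀ z : ℂ, ‖iteratedFDeriv ℝ (n + 1) (fun w : ℂ => w⁻¹ • f w) z‖
        ≤ ‖iteratedFDeriv ℝ n (fun z : ℂ => z⁻¹ • (fun w : ℂ => fderiv ℝ f w) z) z‖
          + ‖(-(L E))‖ * ‖iteratedFDeriv ℝ n
              (fun z : ℂ => z⁻¹ • (fun w : ℂ => w⁻¹ • f w) z) z‖ := by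
      intro z
      have e1 : ‖iteratedFDeriv ℝ (n + 1) (fun w : ℂ => w⁻¹ • f w) z‖
          = ‖iteratedFDeriv ℝ n F z‖ := by
        rw [← norm_iteratedFDeriv_fderiv, hfderiv]
      rw [e1, hFdef, iteratedFDeriv_add_apply hh_cd.contDiffAt hMg2_cd.contDiffAt]
      refine (norm_add_le _ _).trans ?_
      gcongr
      rw [(-(L E)).iteratedFDeriv_comp_left (hg2_cd.contDiffAt (x := z)) le_rfl]
      exact ContinuousLinearMap.norm_compContinuousMultilinearMap_le _ _
    have hv : (fun z : ℂ =>
          ‖iteratedFDeriv ℝ n (fun z : ℂ => z⁻¹ • (fun w : ℂ => fderiv ℝ f w) z) z‖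
          + ‖(-(L E))‖ * ‖iteratedFDeriv ℝ n
              (fun z : ℂ => z⁻¹ • (fun w : ℂ => w⁻¹ • f w) z) z‖)
        =o[𝓝 0] fun z : ℂ => ‖z‖ ^ (p - 1 - (n + 1)) := by
      have h3 : p - 1 - (n + 1) = p - 1 - 1 - n := by omega
      rw [h3]
      exact (hh_o n le_rfl).add ((hg2_o n le_rfl).const_mul_left _)
    refine IsBigO.trans_isLittleO ?_ hv
    refine isBigO_of_le _ fun z => ?_
    rw [Real.norm_of_nonneg (norm_nonneg _), Real.norm_of_nonneg (by positivity)]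
    exact hb z

end QuotByZ

open QuotByZ in
/-- If `ε : ℂ → ℂ` is `C^∞` and vanishes to order `k ≥ 2` at `0` (all its
iterated derivatives of order `≤ k` vanish at `0`), then `τ(z) = ε(z)/z` (with `τ(0) = 0`)
is of class `C^{k-2}`. -/
theorem quotient_by_z_smoothness (k : ℕ) (hk : 2 ≤ k)
    (ε : ℂ → ℂ) (hε : ContDiff ℝ (⊤ : ℕ∞) ε)
    (hvan : ∀ j : ℕ, j ≤ k → iteratedFDeriv ℝ j ε 0 = 0) :
    ContDiff ℝ (k - 2 : ℕ) (fun z : ℂ => if z = 0 then 0 else ε z / z) := by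
  have hfun : (fun z : ℂ => if z = 0 then 0 else ε z / z) = fun z : ℂ => z⁻¹ • ε z := by
    funext z
    rcases eq_or_ne z 0 with rfl | hz
    · simp
    · simp [hz, smul_eq_mul, div_eq_inv_mul]
  rw [hfun]
  obtain ⟨hcd, -⟩ := main_div (k - 1) ℂ k (by omega) ε (hε.of_le (by exact WithTop.coe_le_coe.2 (le_top : ((k - 1 : ℕ) : ℕ∞) ≤ ⊤)))
    (fun j hj => o_vanishing hε k hvan j (by omega))
  exact hcd.of_le (by exact_mod_cast (by omega : k - 1 - 1 ≤ k - 1))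
end

section
/- Let λ ≠ 0 be real and φ(x,t) = e^{λt} x the linear flow on ℝ. Let U ⊆ ℝ be an open interval around 0, f : U \ {0} → ℝ smooth, and suppose h(x) = e^{λ f(x)} x extends to a C^∞ map on U with h(0) = 0 and h'(0) > 0. Then f extends to a C^∞ function on U, given by f(x) = (1/λ) ln φ̃(x), where φ̃ is the unique smooth function with h(x) = x φ̃(x) and φ̃(0) = h'(0). -/
lemma hadamard_hasDerivAt_aux (r : ℝ) (k : ℕ) (G : ℝ → ℝ)
    (hG : ContDiffOn ℝ (⊤ : ℕ∞) G (Set.Ioo (-r) r)) (x0 : ℝ) (hx0 : x0 ∈ Set.Ioo (-r) r) :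
    HasDerivAt (fun x => ∫ t in (0:ℝ)..1, t ^ k * G (t * x))
      (∫ t in (0:ℝ)..1, t ^ (k + 1) * deriv G (t * x0)) x0 := by
  have h1le : (1 : WithTop ℕ∞) ≤ ((⊤ : ℕ∞) : WithTop ℕ∞) := by
    exact_mod_cast (le_top : (1 : ℕ∞) ≤ ⊤)
  have hx0' : |x0| < r := abs_lt.2 hx0
  set ρ := (|x0| + r) / 2 with hρ
  have hρ1 : |x0| < ρ := by linarith
  have hρ2 : ρ < r := by linarith
  have hK : Set.Icc (-ρ) ρ ⊆ Set.Ioo (-r) r :=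
    fun y hy => ⟨by linarith [hy.1], by linarith [hy.2]⟩
  have hGc : ContinuousOn G (Set.Ioo (-r) r) := hG.continuousOn
  have hG'c : ContinuousOn (deriv G) (Set.Ioo (-r) r) :=
    hG.continuousOn_deriv_of_isOpen isOpen_Ioo h1le
  obtain ⟨C, hC⟩ := isCompact_Icc.exists_bound_of_continuousOn (hG'c.mono hK)
  have hmem : ∀ t ∈ Set.Icc (0:ℝ) 1, ∀ x ∈ Set.Icc (-ρ) ρ, t * x ∈ Set.Icc (-ρ) ρ := by
    intro t ht x hx
    have hx' := abs_le.2 hx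
    have : |t * x| ≤ ρ := by
      rw [abs_mul, abs_of_nonneg ht.1]
      nlinarith [abs_nonneg x, ht.2]
    exact abs_le.1 this
  have hcont : ∀ (H : ℝ → ℝ) (j : ℕ), ContinuousOn H (Set.Icc (-ρ) ρ) →
      ∀ x ∈ Set.Icc (-ρ) ρ, ContinuousOn (fun t => t ^ j * H (t * x)) (Set.Icc 0 1) := by
    intro H j hH x hx
    exact (continuousOn_pow j).mul
      (hH.comp (continuousOn_id.mul continuousOn_const) (fun t ht => hmem t ht x hx))
  have hUI : Set.uIoc (0:ℝ) 1 ⊆ Set.Icc 0 1 := by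
    rw [Set.uIoc_of_le zero_le_one]; exact Set.Ioc_subset_Icc_self
  have hx0K : x0 ∈ Set.Icc (-ρ) ρ := abs_le.1 hρ1.le
  have hs : Set.Ioo (-ρ) ρ ∈ nhds x0 := isOpen_Ioo.mem_nhds (abs_lt.1 hρ1)
  have key := intervalIntegral.hasDerivAt_integral_of_dominated_loc_of_deriv_le
    (μ := MeasureTheory.volume) (a := (0:ℝ)) (b := 1) (bound := fun _ => C)
    (F := fun x t => t ^ k * G (t * x)) (F' := fun x t => t ^ (k + 1) * deriv G (t * x))
    (x₀ := x0) hs ?_ ?_ ?_ ?_ ?_ ?_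
  · exact key.2
  · filter_upwards [hs] with x hx
    exact ((hcont G k (hGc.mono hK) x (Set.Ioo_subset_Icc_self hx)).mono hUI).aestronglyMeasurable
      measurableSet_uIoc
  · exact ContinuousOn.intervalIntegrable
      (by rw [Set.uIcc_of_le zero_le_one]; exact hcont G k (hGc.mono hK) x0 hx0K)
  · exact ((hcont (deriv G) (k + 1) (hG'c.mono hK) x0 hx0K).mono hUI).aestronglyMeasurable
      measurableSet_uIoc
  · refine Filter.Eventually.of_forall (fun t ht x hx => ?_)
    have ht' := hUI ht
    have hC' := hC (t * x) (hmem t ht' x (Set.Ioo_subset_Icc_self hx))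
    show ‖t ^ (k + 1) * deriv G (t * x)‖ ≤ C
    rw [norm_mul, norm_pow, Real.norm_eq_abs, abs_of_nonneg ht'.1]
    have : t ^ (k + 1) ≤ 1 := pow_le_one₀ ht'.1 ht'.2
    nlinarith [norm_nonneg (deriv G (t * x)), pow_nonneg ht'.1 (k + 1)]
  · exact intervalIntegrable_const
  · refine Filter.Eventually.of_forall (fun t ht x hx => ?_)
    have hy : t * x ∈ Set.Ioo (-r) r := hK (hmem t (hUI ht) x (Set.Ioo_subset_Icc_self hx))
    have hd : HasDerivAt G (deriv G (t * x)) (t * x) :=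
      (((hG.differentiableOn (ne_of_gt (lt_of_lt_of_le zero_lt_one h1le))) _ hy).differentiableAt (isOpen_Ioo.mem_nhds hy)).hasDerivAt
    have := (hd.comp x ((hasDerivAt_id x).const_mul t)).const_mul (t ^ k)
    have e : t ^ (k + 1) * deriv G (t * x) = t ^ k * (deriv G (t * x) * (t * 1)) := by ring
    rw [e]; exact this

lemma hadamard_contDiffOn_aux (r : ℝ) (n : ℕ) : ∀ (k : ℕ) (G : ℝ → ℝ),
    ContDiffOn ℝ (⊤ : ℕ∞) G (Set.Ioo (-r) r) →
    ContDiffOn ℝ n (fun x => ∫ t in (0:ℝ)..1, t ^ k * G (t * x)) (Set.Ioo (-r) r) := by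
  induction n with
  | zero =>
    intro k G hG
    rw [Nat.cast_zero, contDiffOn_zero]
    intro x hx
    exact (hadamard_hasDerivAt_aux r k G hG x hx).continuousAt.continuousWithinAt
  | succ m ih =>
    intro k G hG
    have hG' : ContDiffOn ℝ (⊤ : ℕ∞) (deriv G) (Set.Ioo (-r) r) :=
      ((contDiffOn_infty_iff_deriv_of_isOpen isOpen_Ioo).1 hG).2
    rw [Nat.cast_succ, contDiffOn_succ_iff_deriv_of_isOpen isOpen_Ioo]
    refine ⟨fun x hx => (hadamard_hasDerivAt_aux r k G hG x hx).differentiableAt.differentiableWithinAt,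
      fun h => absurd h (by simp), ?_⟩
    exact (ih (k + 1) (deriv G) hG').congr
      (fun x hx => (hadamard_hasDerivAt_aux r k G hG x hx).deriv)

lemma hadamard_eq_aux (r : ℝ) (g : ℝ → ℝ) (hg : ContDiffOn ℝ (⊤ : ℕ∞) g (Set.Ioo (-r) r))
    (x : ℝ) (hx : x ∈ Set.Ioo (-r) r) :
    dslope g 0 x = ∫ t in (0:ℝ)..1, t ^ 0 * deriv g (t * x) := by
  simp only [pow_zero, one_mul]
  rcases eq_or_ne x 0 with rfl | hx0
  · simp [dslope_same]
  · have h1le : (1 : WithTop ℕ∞) ≤ ((⊤ : ℕ∞) : WithTop ℕ∞) := by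
      exact_mod_cast (le_top : (1 : ℕ∞) ≤ ⊤)
    have hsub : Set.uIcc 0 x ⊆ Set.Ioo (-r) r := by
      intro y hy
      rw [Set.mem_uIcc] at hy
      constructor <;> rcases hy with ⟨h1, h2⟩ | ⟨h1, h2⟩ <;> linarith [hx.1, hx.2]
    rw [dslope_of_ne _ hx0, slope_def_field,
      intervalIntegral.integral_comp_mul_right (f := deriv g) hx0, zero_mul, one_mul,
      intervalIntegral.integral_eq_sub_of_hasDerivAt (f := g)]
    · rw [smul_eq_mul, sub_zero, div_eq_inv_mul]
    · intro y hy
      exact (((hg.differentiableOn (ne_of_gt (lt_of_lt_of_le zero_lt_one h1le))) y (hsub hy)).differentiableAt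
        (isOpen_Ioo.mem_nhds (hsub hy))).hasDerivAt
    · exact ((hg.continuousOn_deriv_of_isOpen isOpen_Ioo h1le).mono hsub).intervalIntegrable

/-- For the linear flow `φ(x,t) = e^{λt}x` on `ℝ` (`λ ≠ 0`), if
`h(x) = e^{λ f(x)} x` extends smoothly over `0` with `h(0) = 0` and `h'(0) > 0`, then the
shift function `f` extends smoothly, namely `f(x) = (1/λ) ln φ̃(x)` where `φ̃` is the unique
smooth function with `h(x) = x·φ̃(x)` and `φ̃(0) = h'(0)`. -/
theorem linear_flow_shift_function_extends (l : ℝ) (hl : l ≠ 0)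
    (U : Set ℝ) (hU : ∃ a b : ℝ, a < 0 ∧ 0 < b ∧ U = Set.Ioo a b)
    (f h : ℝ → ℝ)
    (hf : ContDiffOn ℝ (⊤ : ℕ∞) f (U \ {0}))
    (hh : ContDiffOn ℝ (⊤ : ℕ∞) h U) (hh0 : h 0 = 0) (hd : 0 < deriv h 0)
    (hrel : ∀ x ∈ U \ {0}, h x = Real.exp (l * f x) * x) :
    ∃ φt : ℝ → ℝ,
      ContDiffOn ℝ (⊤ : ℕ∞) φt U ∧
      (∀ x ∈ U, h x = x * φt x) ∧
      φt 0 = deriv h 0 ∧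
      (∀ ψ : ℝ → ℝ, ContDiffOn ℝ (⊤ : ℕ∞) ψ U → (∀ x ∈ U, h x = x * ψ x) →
        ψ 0 = deriv h 0 → Set.EqOn ψ φt U) ∧
      ContDiffOn ℝ (⊤ : ℕ∞) (fun x => (1 / l) * Real.log (φt x)) U ∧
      (∀ x ∈ U \ {0}, f x = (1 / l) * Real.log (φt x)) := by
  obtain ⟨a, b, ha, hb, rfl⟩ := hU
  have hUo : IsOpen (Set.Ioo a b) := isOpen_Ioo
  have h0mem : (0 : ℝ) ∈ Set.Ioo a b := ⟨ha, hb⟩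
  set r := min (-a) b with hr
  have hr0 : 0 < r := lt_min (by linarith) hb
  have hVsub : Set.Ioo (-r) r ⊆ Set.Ioo a b := fun y hy =>
    ⟨by linarith [hy.1, min_le_left (-a) b], by linarith [hy.2, min_le_right (-a) b]⟩
  have hhV : ContDiffOn ℝ (⊤ : ℕ∞) h (Set.Ioo (-r) r) := hh.mono hVsub
  have hderV : ContDiffOn ℝ (⊤ : ℕ∞) (deriv h) (Set.Ioo (-r) r) :=
    ((contDiffOn_infty_iff_deriv_of_isOpen isOpen_Ioo).1 hhV).2
  have hIV : ContDiffOn ℝ (⊤ : ℕ∞) (fun x => ∫ t in (0:ℝ)..1, t ^ 0 * deriv h (t * x))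
      (Set.Ioo (-r) r) :=
    contDiffOn_infty.2 (fun n => hadamard_contDiffOn_aux r n 0 (deriv h) hderV)
  set φt : ℝ → ℝ := dslope h 0 with hφt
  have hcd : ContDiffOn ℝ (⊤ : ℕ∞) φt (Set.Ioo a b) := by
    apply contDiffOn_of_locally_contDiffOn
    intro x hx
    rcases eq_or_ne x 0 with rfl | hx0
    · refine ⟨Set.Ioo (-r) r, isOpen_Ioo, ⟨neg_lt_zero.2 hr0, hr0⟩, ?_⟩
      exact (hIV.mono Set.inter_subset_right).congr
        (fun y hy => hadamard_eq_aux r h hhV y hy.2)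
    · refine ⟨{0}ᶜ, isOpen_compl_singleton, hx0, ?_⟩
      have hq : ContDiffOn ℝ (⊤ : ℕ∞) (fun y => (h y - h 0) / (y - 0)) (Set.Ioo a b ∩ {0}ᶜ) :=
        ((hh.mono Set.inter_subset_left).sub contDiffOn_const).div
          (contDiffOn_id.sub contDiffOn_const) (fun y hy => by simpa using hy.2)
      exact hq.congr (fun y hy => by
        rw [hφt, dslope_of_ne _ (by simpa using hy.2), slope_def_field])
  -- the factorization h x = x * φt x
  have hxφ : ∀ x : ℝ, h x = x * φt x := by
    intro x
    have := sub_smul_dslope h 0 x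
    rw [smul_eq_mul, hh0] at this
    linarith
  -- value at 0
  have hφ0 : φt 0 = deriv h 0 := dslope_same h 0
  -- on U \ {0}, φt x = exp (l * f x)
  have hφexp : ∀ x ∈ Set.Ioo a b \ {0}, φt x = Real.exp (l * f x) := by
    intro x hx
    have hx0 : x ≠ 0 := by simpa using hx.2
    have h1 : x * φt x = x * Real.exp (l * f x) := by
      rw [← hxφ x, hrel x hx]; ring
    exact mul_left_cancel₀ hx0 h1
  -- positivity on U
  have hφpos : ∀ x ∈ Set.Ioo a b, 0 < φt x := by
    intro x hx
    rcases eq_or_ne x 0 with rfl | hx0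
    · rw [hφ0]; exact hd
    · rw [hφexp x ⟨hx, by simpa using hx0⟩]; exact Real.exp_pos _
  refine ⟨φt, hcd, fun x _ => hxφ x, hφ0, ?_, ?_, ?_⟩
  · intro ψ _ hψ hψ0 x hx
    rcases eq_or_ne x 0 with rfl | hx0
    · exact hψ0.trans hφ0.symm
    · exact mul_left_cancel₀ hx0 ((hψ x hx).symm.trans (hxφ x))
  · exact contDiffOn_const.mul (hcd.log fun x hx => (hφpos x hx).ne')
  · intro x hx
    rw [hφexp x hx, Real.log_exp]
    field_simp
end

section
/- Let φ be the flow on ℝ generated by dx/dt = xⁿ with n ≥ 2 (defined on a small interval I = (−a, a)), and let h : I → I be a smooth orientation-preserving diffeomorphism fixing 0 with h'(0) > 0 that maps each of the three trajectories (−a,0), {0}, (0,a) into itself. Then the time function f defined on I \ {0} by h(z) = φ(z, f(z)) equals f(z) = (zⁿ⁻¹ − h(z)ⁿ⁻¹) / ((n−1) h(z)ⁿ⁻¹ zⁿ⁻¹), and f extends smoothly to 0 if and only if h(z) = z + zⁿ c(z) for some smooth function c, i.e., if and only if h'(0) = 1 and h^{(k)}(0) = 0 for k = 2, …, n−1. 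-/
open Set Filter Topology

section Aux

lemma smooth_diffAt {u : ℝ → ℝ} {s : Set ℝ} (hs : IsOpen s)
    (hu : ContDiffOn ℝ (⊤ : ℕ∞) u s) {z : ℝ} (hz : z ∈ s) : DifferentiableAt ℝ u z :=
  (((contDiffOn_infty_iff_deriv_of_isOpen hs).1 hu).1 z hz).differentiableAt (hs.mem_nhds hz)

lemma analytic_iteratedDeriv {u : ℝ → ℝ} {s : Set ℝ} (hs : IsOpen s)
    (hu : ContDiffOn ℝ (⊤ : ℕ∞) u s) (j : ℕ) :
    ContDiffOn ℝ (⊤ : ℕ∞) (iteratedDeriv j u) s := by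
  induction j with
  | zero => simpa [iteratedDeriv_zero] using hu
  | succ j ih => rw [iteratedDeriv_succ]; exact ((contDiffOn_infty_iff_deriv_of_isOpen hs).1 ih).2

lemma abs_tmul_le {x t : ℝ} (ht : t ∈ Icc (0:ℝ) 1) : |t * x| ≤ |x| := by
  rw [abs_mul, abs_of_nonneg ht.1]
  exact mul_le_of_le_one_left (abs_nonneg _) ht.2

lemma smooth_dslope {a : ℝ} {u : ℝ → ℝ} (hu : ContDiffOn ℝ (⊤ : ℕ∞) u (Ioo (-a) a))
    (hu0 : u 0 = 0) : ContDiffOn ℝ (⊤ : ℕ∞) (dslope u 0) (Ioo (-a) a) := by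
  set I := Ioo (-a) a with hIdef
  have hIo : IsOpen I := isOpen_Ioo
  have hmemI : ∀ x ∈ I, ∀ t ∈ Icc (0:ℝ) 1, t * x ∈ I := by
    intro x hx t ht
    have h1 := abs_tmul_le (x := x) ht
    have h2 : |x| < a := abs_lt.mpr ⟨hx.1, hx.2⟩
    exact abs_lt.mp (lt_of_le_of_lt h1 h2)
  have hv : ∀ j, ContDiffOn ℝ (⊤ : ℕ∞) (iteratedDeriv j u) I := analytic_iteratedDeriv hIo hu
  have hvc : ∀ j, ContinuousOn (iteratedDeriv j u) I := fun j => (hv j).continuousOn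
  have hvd : ∀ j, ∀ y ∈ I, HasDerivAt (iteratedDeriv j u) (iteratedDeriv (j+1) u y) y := by
    intro j y hy
    rw [iteratedDeriv_succ]
    exact (smooth_diffAt hIo (hv j) hy).hasDerivAt
  have hIoc : Set.uIoc (0:ℝ) 1 ⊆ Icc 0 1 := by
    rw [uIoc_of_le zero_le_one]; exact Ioc_subset_Icc_self
  have hcont : ∀ k j, ∀ x ∈ I, ContinuousOn (fun t : ℝ => t ^ k * iteratedDeriv j u (t * x))
      (Icc 0 1) := by
    intro k j x hx
    exact (continuousOn_pow k).mul ((hvc j).comp (continuousOn_id.mul continuousOn_const)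
      (fun t ht => hmemI x hx t ht))
  set G : ℕ → ℝ → ℝ := fun k z => ∫ t in (0:ℝ)..1, t ^ k * iteratedDeriv (k+1) u (t * z)
    with hGdef
  have hd : ∀ k, ∀ z ∈ I, HasDerivAt (G k) (G (k+1) z) z := by
    intro k z hz
    have hza : |z| < a := abs_lt.mpr ⟨hz.1, hz.2⟩
    set r := (|z| + a) / 2 with hr
    have hzr : |z| < r := by rw [hr]; linarith
    have hra : r < a := by rw [hr]; linarith
    have hsub : ∀ x ∈ Ioo (-r) r, x ∈ I := fun x hx => ⟨by linarith [hx.1], by linarith [hx.2]⟩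
    have hsn : Ioo (-r) r ∈ 𝓝 z := Ioo_mem_nhds (by linarith [neg_abs_le z]) (by linarith [le_abs_self z])
    have hIcc : Icc (-r) r ⊆ I := fun y hy => ⟨by linarith [hy.1], by linarith [hy.2]⟩
    obtain ⟨C, hC⟩ := (isCompact_Icc (a := -r) (b := r)).exists_bound_of_continuousOn
      ((hvc (k+1+1)).mono hIcc)
    have hmemr : ∀ x ∈ Ioo (-r) r, ∀ t ∈ Icc (0:ℝ) 1, t * x ∈ Icc (-r) r := by
      intro x hx t ht
      have h1 := abs_tmul_le (x := x) ht
      have h2 : |x| < r := abs_lt.mpr ⟨hx.1, hx.2⟩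
      exact abs_le.mp (by linarith)
    have key := intervalIntegral.hasDerivAt_integral_of_dominated_loc_of_deriv_le
      (μ := MeasureTheory.volume) (a := (0:ℝ)) (b := 1)
      (F := fun x t => t ^ k * iteratedDeriv (k+1) u (t * x))
      (F' := fun x t => t ^ (k+1) * iteratedDeriv (k+1+1) u (t * x))
      (bound := fun _ => C) hsn ?_ ?_ ?_ ?_ intervalIntegrable_const ?_
    · exact key.2
    · filter_upwards [hsn] with x hx
      exact ((hcont k (k+1) x (hsub x hx)).mono hIoc).aestronglyMeasurable measurableSet_uIoc
    · apply ContinuousOn.intervalIntegrable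
      rw [uIcc_of_le zero_le_one]
      exact hcont k (k+1) z hz
    · exact ((hcont (k+1) (k+1+1) z hz).mono hIoc).aestronglyMeasurable measurableSet_uIoc
    · refine Filter.Eventually.of_forall (fun t ht x hx => ?_)
      have ht' := hIoc ht
      have hb := hC (t * x) (hmemr x hx t ht')
      rw [norm_mul]
      have hp : ‖t ^ (k+1)‖ ≤ 1 := by
        rw [norm_pow, Real.norm_eq_abs, abs_of_nonneg ht'.1]
        exact pow_le_one₀ ht'.1 ht'.2
      calc ‖t ^ (k+1)‖ * ‖iteratedDeriv (k+1+1) u (t * x)‖ ≤ 1 * C :=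
            mul_le_mul hp hb (norm_nonneg _) zero_le_one
        _ = C := one_mul C
    · refine Filter.Eventually.of_forall (fun t ht x hx => ?_)
      have ht' := hIoc ht
      have h1 := (hvd (k+1) (t * x) (hIcc (hmemr x hx t ht'))).comp x
        ((hasDerivAt_id' x).const_mul t)
      have h2 := h1.const_mul (t ^ k)
      exact h2.congr_deriv (by ring)
  have hCk : ∀ N : ℕ, ∀ k, ContDiffOn ℝ N (G k) I := by
    intro N
    induction N with
    | zero =>
      intro k
      rw [Nat.cast_zero, contDiffOn_zero]
      exact fun z hz => (hd k z hz).continuousAt.continuousWithinAt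
    | succ N ih =>
      intro k
      rw [Nat.cast_succ, contDiffOn_succ_iff_deriv_of_isOpen hIo]
      refine ⟨fun z hz => (hd k z hz).differentiableAt.differentiableWithinAt,
        fun h => absurd h (by simp), ?_⟩
      exact (ih (k+1)).congr (fun z hz => (hd k z hz).deriv)
  have hG0 : ContDiffOn ℝ (⊤ : ℕ∞) (G 0) I := contDiffOn_infty.2 (fun N => hCk N 0)
  refine hG0.congr (fun z hz => ?_)
  rcases eq_or_ne z 0 with rfl | hne
  · rw [dslope_same]
    simp [hGdef, iteratedDeriv_one]
  · rw [dslope_of_ne _ hne, slope_def_field, sub_zero]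
    have hI := intervalIntegral.integral_eq_sub_of_hasDerivAt (a := (0:ℝ)) (b := 1)
      (f := fun t => u (t * z) / z)
      (f' := fun t => t ^ 0 * iteratedDeriv (0+1) u (t * z)) ?_ ?_
    · show _ = ∫ t in (0:ℝ)..1, t ^ 0 * iteratedDeriv (0+1) u (t * z)
      rw [hI]
      rw [one_mul, zero_mul, sub_div]
    · intro t ht
      rw [uIcc_of_le zero_le_one] at ht
      have h1 := hvd 0 (t * z) (hmemI z hz t ht)
      rw [iteratedDeriv_zero] at h1
      have h2 := (h1.comp t ((hasDerivAt_id' t).mul_const z)).div_const z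
      exact h2.congr_deriv (by field_simp)
    · apply ContinuousOn.intervalIntegrable
      rw [uIcc_of_le zero_le_one]
      exact hcont 0 (0+1) z hz

/-- Hadamard division of order one, for analytic functions, using `dslope`. -/
lemma hadamard_one {u : ℝ → ℝ} {a : ℝ}
    (hu : ContDiffOn ℝ (⊤ : ℕ∞) u (Ioo (-a) a)) (hu0 : u 0 = 0) :
    ContDiffOn ℝ (⊤ : ℕ∞) (dslope u 0) (Ioo (-a) a) ∧ (∀ z, u z = z * dslope u 0 z) := by
  constructor
  · exact smooth_dslope hu hu0
  · intro z
    rcases eq_or_ne z 0 with rfl | hne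
    · simp [hu0]
    · rw [dslope_of_ne _ hne, slope_def_field, hu0]
      field_simp
      ring

lemma iteratedDeriv_congr_nhds {u v : ℝ → ℝ} {x : ℝ} (h : u =ᶠ[𝓝 x] v) (k : ℕ) :
    iteratedDeriv k u =ᶠ[𝓝 x] iteratedDeriv k v := by
  induction k with
  | zero => simpa [iteratedDeriv_zero] using h
  | succ k ih => rw [iteratedDeriv_succ, iteratedDeriv_succ]; exact ih.deriv

/-- Leibniz rule for multiplication by the identity, at the level of iterated derivatives. -/
lemma iteratedDeriv_id_mul {w : ℝ → ℝ} {s : Set ℝ} (hs : IsOpen s)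
    (hw : ContDiffOn ℝ (⊤ : ℕ∞) w s) (j : ℕ) :
    ∀ z ∈ s, iteratedDeriv (j+1) (fun x => x * w x) z
      = z * iteratedDeriv (j+1) w z + ((j:ℝ)+1) * iteratedDeriv j w z := by
  induction j with
  | zero =>
    intro z hz
    have hw' : DifferentiableAt ℝ w z := smooth_diffAt hs hw hz
    have hder : HasDerivAt (fun x => x * w x) (1 * w z + z * deriv w z) z :=
      (hasDerivAt_id z).mul hw'.hasDerivAt
    rw [iteratedDeriv_one, hder.deriv, iteratedDeriv_one, iteratedDeriv_zero]
    push_cast; ring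
  | succ j ih =>
    intro z hz
    have hev : iteratedDeriv (j+1) (fun x => x * w x)
        =ᶠ[𝓝 z] fun x => x * iteratedDeriv (j+1) w x + ((j:ℝ)+1) * iteratedDeriv j w x := by
      filter_upwards [hs.mem_nhds hz] with x hx using ih x hx
    rw [iteratedDeriv_succ, hev.deriv_eq]
    have h1 : DifferentiableAt ℝ (iteratedDeriv (j+1) w) z :=
        smooth_diffAt hs (analytic_iteratedDeriv hs hw (j+1)) hz
    have h2 : DifferentiableAt ℝ (iteratedDeriv j w) z :=
        smooth_diffAt hs (analytic_iteratedDeriv hs hw j) hz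
    have hd1 : HasDerivAt
        (fun x => x * iteratedDeriv (j+1) w x + ((j:ℝ)+1) * iteratedDeriv j w x)
        ((1 * iteratedDeriv (j+1) w z + z * deriv (iteratedDeriv (j+1) w) z)
          + ((j:ℝ)+1) * deriv (iteratedDeriv j w) z) z :=
      ((hasDerivAt_id z).mul h1.hasDerivAt).add (h2.hasDerivAt.const_mul _)
    rw [hd1.deriv, ← iteratedDeriv_succ, ← iteratedDeriv_succ]
    push_cast; ring

/-- A function of the form `z ^ q * w z` with `w` analytic has vanishing derivatives at `0`
up to order `q - 1`. -/
lemma iteratedDeriv_pow_mul_zero {s : Set ℝ} (hs : IsOpen s) (h0 : (0:ℝ) ∈ s) :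
    ∀ q : ℕ, ∀ w : ℝ → ℝ, ContDiffOn ℝ (⊤ : ℕ∞) w s → ∀ k < q,
      iteratedDeriv k (fun z => z ^ q * w z) 0 = 0 := by
  intro q
  induction q with
  | zero => intro w _ k hk; omega
  | succ q ih =>
    intro w hw k hk
    have hw2 : ContDiffOn ℝ (⊤ : ℕ∞) (fun z => z ^ q * w z) s :=
      ((contDiffOn_id (s := s)).pow q).mul hw
    have hfun : (fun z : ℝ => z ^ (q+1) * w z) = fun z => z * (z ^ q * w z) := by
      funext z; ring
    rw [hfun]
    match k, hk with
    | 0, _ => simp [iteratedDeriv_zero]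
    | (j+1), hk =>
      have hiter := iteratedDeriv_id_mul hs hw2 j 0 h0
      rw [hiter, ih w hw j (by omega)]
      ring

/-- Hadamard division of arbitrary order for analytic functions. -/
lemma hadamard_n {a : ℝ} (ha : 0 < a) :
    ∀ p : ℕ, ∀ u : ℝ → ℝ, ContDiffOn ℝ (⊤ : ℕ∞) u (Ioo (-a) a) →
      (∀ k ≤ p, iteratedDeriv k u 0 = 0) →
      ∃ c : ℝ → ℝ, ContDiffOn ℝ (⊤ : ℕ∞) c (Ioo (-a) a) ∧ ∀ z, u z = z ^ (p+1) * c z := by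
  have hs : IsOpen (Ioo (-a) a) := isOpen_Ioo
  have h0 : (0:ℝ) ∈ Ioo (-a) a := ⟨by linarith, ha⟩
  intro p
  induction p with
  | zero =>
    intro u hu hvan
    have hu0 : u 0 = 0 := by simpa [iteratedDeriv_zero] using hvan 0 le_rfl
    obtain ⟨hg, hz⟩ := hadamard_one hu hu0
    exact ⟨dslope u 0, hg, fun z => by simpa [pow_one] using hz z⟩
  | succ p ih =>
    intro u hu hvan
    have hu0 : u 0 = 0 := by simpa [iteratedDeriv_zero] using hvan 0 (by omega)
    obtain ⟨hg, hz⟩ := hadamard_one hu hu0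
    have hvg : ∀ k ≤ p, iteratedDeriv k (dslope u 0) 0 = 0 := by
      intro k hkp
      have hfun : u = fun x => x * dslope u 0 x := funext hz
      have hiter := iteratedDeriv_id_mul hs hg k 0 h0
      rw [← hfun] at hiter
      rw [hvan (k+1) (by omega)] at hiter
      have hne : ((k:ℝ)+1) ≠ 0 := by positivity
      have : ((k:ℝ)+1) * iteratedDeriv k (dslope u 0) 0 = 0 := by linarith
      exact (mul_eq_zero.mp this).resolve_left hne
    obtain ⟨c, hc, hcz⟩ := ih (dslope u 0) hg hvg
    refine ⟨c, hc, fun z => ?_⟩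
    rw [hz z, hcz z]; ring

/-- Derivatives of `w - id` agree with those of `w` in degrees `≥ 2`. -/
lemma iteratedDeriv_sub_id {s : Set ℝ} (hs : IsOpen s) {w : ℝ → ℝ}
    (hw : ContDiffOn ℝ (⊤ : ℕ∞) w s) :
    (∀ z ∈ s, deriv (fun x => w x - x) z = deriv w z - 1) ∧
    (∀ j : ℕ, ∀ z ∈ s, iteratedDeriv (j+2) (fun x => w x - x) z = iteratedDeriv (j+2) w z) := by
  have hd : ∀ z ∈ s, deriv (fun x => w x - x) z = deriv w z - 1 := by
    intro z hz
    exact ((smooth_diffAt hs hw hz).hasDerivAt.sub (hasDerivAt_id z)).deriv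
  refine ⟨hd, ?_⟩
  intro j
  induction j with
  | zero =>
    intro z hz
    have hev : iteratedDeriv 1 (fun x => w x - x) =ᶠ[𝓝 z] fun x => deriv w x - 1 := by
      filter_upwards [hs.mem_nhds hz] with x hx
      rw [iteratedDeriv_one]; exact hd x hx
    calc iteratedDeriv (0+2) (fun x => w x - x) z
        = deriv (iteratedDeriv 1 (fun x => w x - x)) z := by
          rw [show (0+2:ℕ) = 1+1 from rfl, iteratedDeriv_succ]
      _ = deriv (fun x => deriv w x - 1) z := hev.deriv_eq
      _ = deriv (deriv w) z := deriv_sub_const 1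
      _ = iteratedDeriv (0+2) w z := by
          rw [show (0+2:ℕ) = 1+1 from rfl, iteratedDeriv_succ, iteratedDeriv_one]
  | succ j ih =>
    intro z hz
    show iteratedDeriv ((j+2)+1) (fun x => w x - x) z = iteratedDeriv ((j+2)+1) w z
    rw [iteratedDeriv_succ, iteratedDeriv_succ (n := j + 2)]
    have hev : iteratedDeriv (j+2) (fun x => w x - x) =ᶠ[𝓝 z] iteratedDeriv (j+2) w := by
      filter_upwards [hs.mem_nhds hz] with x hx using ih x hx
    exact hev.deriv_eq

end Aux

/-- For the flow of `dx/dt = xⁿ` (`n ≥ 2`) on `I = (-a,a)` and a smooth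
orientation-preserving diffeomorphism `h` of `I` fixing `0` and preserving the three
trajectories `(-a,0)`, `{0}`, `(0,a)`, the time function
`f(z) = (z^{n-1} - h(z)^{n-1}) / ((n-1)·h(z)^{n-1}·z^{n-1})` extends smoothly to `0`
iff `h(z) = z + zⁿ c(z)` for a smooth `c`, iff `h'(0) = 1` and `h⁽ᵏ⁾(0) = 0` for
`k = 2, …, n-1`. -/
theorem ode_power_flow_shift_extension (n : ℕ) (hn : 2 ≤ n) (a : ℝ) (ha : 0 < a)
    (h : ℝ → ℝ)
    (hsm : ContDiffOn ℝ (⊤ : ℕ∞) h (Set.Ioo (-a) a))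
    (hbij : Set.BijOn h (Set.Ioo (-a) a) (Set.Ioo (-a) a))
    (h0 : h 0 = 0) (hd0 : 0 < deriv h 0)
    (hor : ∀ z ∈ Set.Ioo (-a) a, 0 < deriv h z)
    (hneg : ∀ z ∈ Set.Ioo (-a) a, z < 0 → h z < 0)
    (hpos : ∀ z ∈ Set.Ioo (-a) a, 0 < z → 0 < h z)
    (f : ℝ → ℝ)
    (hfdef : ∀ z, f z =
      (z ^ (n - 1) - (h z) ^ (n - 1)) /
        (((n : ℝ) - 1) * (h z) ^ (n - 1) * z ^ (n - 1))) :
    ((∃ F : ℝ → ℝ, ContDiffOn ℝ (⊤ : ℕ∞) F (Set.Ioo (-a) a) ∧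
        Set.EqOn F f (Set.Ioo (-a) a \ {0})) ↔
      (∃ c : ℝ → ℝ, ContDiffOn ℝ (⊤ : ℕ∞) c (Set.Ioo (-a) a) ∧
        ∀ z ∈ Set.Ioo (-a) a, h z = z + z ^ n * c z)) ∧
    ((∃ F : ℝ → ℝ, ContDiffOn ℝ (⊤ : ℕ∞) F (Set.Ioo (-a) a) ∧
        Set.EqOn F f (Set.Ioo (-a) a \ {0})) ↔
      (deriv h 0 = 1 ∧ ∀ k : ℕ, 2 ≤ k → k ≤ n - 1 → iteratedDeriv k h 0 = 0)) := by
  set I := Set.Ioo (-a) a with hIdef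
  have hIo : IsOpen I := isOpen_Ioo
  have h0I : (0:ℝ) ∈ I := by constructor <;> simpa using ha
  have hUD : UniqueDiffOn ℝ I := hIo.uniqueDiffOn
  set m : ℕ := n - 1 with hm
  have hm1 : 1 ≤ m := by omega
  have hmn : m + 1 = n := by omega
  have hmcast : ((n:ℝ) - 1) = (m:ℝ) := by
    rw [hm]; push_cast [Nat.cast_sub (show 1 ≤ n by omega)]; ring
  have hmne : ((m:ℝ)) ≠ 0 := by positivity
  have toA : ∀ {u : ℝ → ℝ}, ContDiffOn ℝ (⊤ : ℕ∞) u I → ContDiffOn ℝ (⊤ : ℕ∞) u I := fun hu =>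
    hu
  have hA : ContDiffOn ℝ (⊤ : ℕ∞) h I := toA hsm
  obtain ⟨gA, hzg⟩ := hadamard_one hA h0
  set g := dslope h 0 with hgdef
  have g0 : g 0 = deriv h 0 := dslope_same h 0
  have gpos : ∀ z ∈ I, 0 < g z := by
    intro z hz
    rcases lt_trichotomy z 0 with hlt | heq | hgt
    · have hhz : h z < 0 := hneg z hz hlt
      nlinarith [hzg z]
    · rw [heq, g0]; exact hd0
    · have hhz : 0 < h z := hpos z hz hgt
      nlinarith [hzg z]
  set T : ℝ → ℝ := fun z => ∑ i ∈ Finset.range m, (g z)^i with hTdef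
  have TA : ContDiffOn ℝ (⊤ : ℕ∞) T I :=
    ContDiffOn.sum (fun i _ => gA.pow i)
  have Tpos : ∀ z ∈ I, 0 < T z := fun z hz =>
    Finset.sum_pos (fun i _ => pow_pos (gpos z hz) i) (by simp; omega)
  have Tgeom : ∀ z, T z * (g z - 1) = (g z)^m - 1 := fun z => geom_sum_mul (g z) m
  -- B implies h'(0) = 1
  have derivOne : ∀ c : ℝ → ℝ, ContDiffOn ℝ (⊤ : ℕ∞) c I →
      (∀ z ∈ I, h z = z + z^n * c z) → deriv h 0 = 1 := by
    intro c hcsm hc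
    have hcd : DifferentiableAt ℝ c 0 := smooth_diffAt hIo (toA hcsm) h0I
    have hder : HasDerivAt (fun z : ℝ => z + z^n * c z)
        (1 + (((n:ℝ) * 0^(n-1)) * c 0 + 0^n * deriv c 0)) 0 :=
      (hasDerivAt_id 0).add ((hasDerivAt_pow n 0).mul hcd.hasDerivAt)
    have hval : (1 + (((n:ℝ) * 0^(n-1)) * c 0 + 0^n * deriv c 0)) = 1 := by
      rw [zero_pow (show n - 1 ≠ 0 by omega), zero_pow (show n ≠ 0 by omega)]; ring
    have hev : h =ᶠ[𝓝 0] fun z => z + z^n * c z := by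
      filter_upwards [hIo.mem_nhds h0I] with z hzI using hc z hzI
    rw [hev.deriv_eq]
    rw [hval] at hder
    exact hder.deriv
  -- Ext → B
  have E1 : (∃ F : ℝ → ℝ, ContDiffOn ℝ (⊤ : ℕ∞) F I ∧ Set.EqOn F f (I \ {0})) →
      (∃ c : ℝ → ℝ, ContDiffOn ℝ (⊤ : ℕ∞) c I ∧ ∀ z ∈ I, h z = z + z ^ n * c z) := by
    rintro ⟨F, hFsm, hFf⟩
    have FA : ContDiffOn ℝ (⊤ : ℕ∞) F I := toA hFsm
    have keyne : ∀ z ∈ I, z ≠ 0 →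
        (g z)^m - 1 = -((m:ℝ) * z^m * (g z)^m * F z) := by
      intro z hz hz0
      have hFz : F z = f z := hFf ⟨hz, by simpa using hz0⟩
      have hgz := gpos z hz
      have hzm : z^m ≠ 0 := pow_ne_zero _ hz0
      have hgm : (g z)^m ≠ 0 := by positivity
      rw [hFz, hfdef z, hzg z, hmcast]
      field_simp
      ring
    have key0 : (g 0)^m = 1 := by
      set A : ℝ → ℝ := fun z => (g z)^m - 1 + (m:ℝ) * z^m * (g z)^m * F z with hAdef
      have hAan : ContDiffOn ℝ (⊤ : ℕ∞) A I :=
        ((gA.pow m).sub contDiffOn_const).add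
          (((contDiffOn_const.mul ((contDiffOn_id (s := I)).pow m)).mul
            (gA.pow m)).mul FA)
      have hCA : ContinuousAt A 0 :=
        (hAan.continuousOn.continuousAt (hIo.mem_nhds h0I))
      have h1 : Tendsto A (𝓝[≠] (0:ℝ)) (𝓝 (A 0)) :=
        hCA.tendsto.mono_left nhdsWithin_le_nhds
      have h2 : ∀ᶠ z in 𝓝[≠] (0:ℝ), A z = 0 := by
        filter_upwards [self_mem_nhdsWithin,
          mem_nhdsWithin_of_mem_nhds (hIo.mem_nhds h0I)] with z hz1 hz2
        have := keyne z hz2 hz1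
        simp only [hAdef]; linarith
      have h3 : Tendsto A (𝓝[≠] (0:ℝ)) (𝓝 0) :=
        Tendsto.congr' (Filter.EventuallyEq.symm h2) tendsto_const_nhds
      have hA0 : A 0 = 0 := tendsto_nhds_unique h1 h3
      have : (g 0)^m - 1 + (m:ℝ) * 0^m * (g 0)^m * F 0 = 0 := hA0
      rw [zero_pow (show m ≠ 0 by omega)] at this
      linarith
    have g0' : g 0 = 1 := by
      have hgpos := gpos 0 h0I
      rcases lt_trichotomy (g 0) 1 with hlt | heq | hgt
      · have := pow_lt_one₀ (le_of_lt hgpos) hlt (show m ≠ 0 by omega)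
        linarith [key0]
      · exact heq
      · have := one_lt_pow₀ hgt (show m ≠ 0 by omega)
        linarith [key0]
    have key : ∀ z ∈ I, (g z)^m - 1 = -((m:ℝ) * z^m * (g z)^m * F z) := by
      intro z hz
      rcases eq_or_ne z 0 with rfl | hne
      · rw [key0, zero_pow (show m ≠ 0 by omega)]; ring
      · exact keyne z hz hne
    refine ⟨fun z => -((m:ℝ) * (g z)^m * F z) / T z, ?_, ?_⟩
    · exact ContDiffOn.fun_div
        ((contDiffOn_const.mul (gA.pow m)).mul FA).neg TA
        (fun z hz => (Tpos z hz).ne')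
    · intro z hz
      have hTz : T z ≠ 0 := (Tpos z hz).ne'
      have hk := key z hz
      show h z = z + z ^ n * (-((m:ℝ) * g z ^ m * F z) / T z)
      rw [hzg z, ← hmn]
      have h1 : z * (g z - 1) * T z = z * (g z ^ m - 1) := by
        rw [mul_assoc, mul_comm (g z - 1) (T z), Tgeom z]
      have key' : z ^ (m+1) * (-((m:ℝ) * g z ^ m * F z)) = z * (g z - 1) * T z := by
        rw [h1, hk]; ring
      have e2 : z ^ (m+1) * (-((m:ℝ) * g z ^ m * F z) / T z) = z * (g z - 1) := by
        rw [← mul_div_assoc, key', mul_div_assoc, div_self hTz, mul_one]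
      rw [e2]; ring
  -- B → Ext
  have E2 : (∃ c : ℝ → ℝ, ContDiffOn ℝ (⊤ : ℕ∞) c I ∧ ∀ z ∈ I, h z = z + z ^ n * c z) →
      (∃ F : ℝ → ℝ, ContDiffOn ℝ (⊤ : ℕ∞) F I ∧ Set.EqOn F f (I \ {0})) := by
    rintro ⟨c, hcsm, hc⟩
    have cA : ContDiffOn ℝ (⊤ : ℕ∞) c I := toA hcsm
    have hd1 : deriv h 0 = 1 := derivOne c hcsm hc
    have g0' : g 0 = 1 := by rw [g0, hd1]
    have gc : ∀ z ∈ I, g z = 1 + z^m * c z := by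
      intro z hz
      rcases eq_or_ne z 0 with rfl | hne
      · rw [g0', zero_pow (show m ≠ 0 by omega)]; ring
      · have h1 : z * g z = z * (1 + z^m * c z) := by
          calc z * g z = z + z^n * c z := by rw [← hzg z]; exact hc z hz
          _ = z * (1 + z^m * c z) := by rw [← hmn]; ring
        exact mul_left_cancel₀ hne h1
    refine ⟨fun z => -(c z * T z) / (((m:ℝ)) * (g z)^m), ?_, ?_⟩
    · refine ContDiffOn.fun_div (cA.mul TA).neg
        (contDiffOn_const.mul (gA.pow m)) (fun z hz => ?_)
      have := gpos z hz
      have h1 : (0:ℝ) < (m:ℝ) * (g z)^m := by positivity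
      exact h1.ne'
    · intro z hzd
      obtain ⟨hz, hzne⟩ := hzd
      have hz0 : z ≠ 0 := by simpa using hzne
      have hgz := gpos z hz
      have hzm : z^m ≠ 0 := pow_ne_zero _ hz0
      have hgm : (g z)^m ≠ 0 := by positivity
      have hTz : T z ≠ 0 := (Tpos z hz).ne'
      have hcgz : z^m * c z = g z - 1 := by rw [gc z hz]; ring
      have hTg := Tgeom z
      show -(c z * T z) / ((m:ℝ) * g z ^ m) = f z
      rw [hfdef z, hzg z, hmcast]
      have hD1 : ((m:ℝ) * g z ^ m) ≠ 0 := by positivity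
      have hD2 : ((m:ℝ) * (z * g z) ^ m * z ^ m) ≠ 0 :=
        mul_ne_zero (mul_ne_zero hmne (pow_ne_zero _ (mul_ne_zero hz0 hgz.ne'))) hzm
      rw [div_eq_div_iff hD1 hD2]
      linear_combination (-(m:ℝ) * g z ^ m * z ^ m * T z) * hcgz
        + (-(m:ℝ) * g z ^ m * z ^ m) * hTg
  -- B → C
  have E3 : (∃ c : ℝ → ℝ, ContDiffOn ℝ (⊤ : ℕ∞) c I ∧ ∀ z ∈ I, h z = z + z ^ n * c z) →
      (deriv h 0 = 1 ∧ ∀ k : ℕ, 2 ≤ k → k ≤ m → iteratedDeriv k h 0 = 0) := by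
    rintro ⟨c, hcsm, hc⟩
    have cA : ContDiffOn ℝ (⊤ : ℕ∞) c I := toA hcsm
    refine ⟨derivOne c hcsm hc, ?_⟩
    intro k hk2 hkm
    have hV : iteratedDeriv k (fun z => z^n * c z) 0 = 0 :=
      iteratedDeriv_pow_mul_zero hIo h0I n c cA k (by omega)
    have hev : (fun x => h x - x) =ᶠ[𝓝 (0:ℝ)] fun z => z^n * c z := by
      filter_upwards [hIo.mem_nhds h0I] with z hz
      rw [hc z hz]; ring
    have hEq : iteratedDeriv k (fun x => h x - x) 0
        = iteratedDeriv k (fun z => z^n * c z) 0 :=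
      (iteratedDeriv_congr_nhds hev k).eq_of_nhds
    obtain ⟨j, rfl⟩ : ∃ j, k = j + 2 := ⟨k - 2, by omega⟩
    rw [← (iteratedDeriv_sub_id hIo hA).2 j 0 h0I, hEq, hV]
  -- C → B
  have E4 : (deriv h 0 = 1 ∧ ∀ k : ℕ, 2 ≤ k → k ≤ m → iteratedDeriv k h 0 = 0) →
      (∃ c : ℝ → ℝ, ContDiffOn ℝ (⊤ : ℕ∞) c I ∧ ∀ z ∈ I, h z = z + z ^ n * c z) := by
    rintro ⟨hd1, hk⟩
    have vA : ContDiffOn ℝ (⊤ : ℕ∞) (fun x => h x - x) I :=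
      hA.sub (contDiffOn_id (s := I))
    have hvan : ∀ k ≤ m, iteratedDeriv k (fun x => h x - x) 0 = 0 := by
      intro k hkle
      match k, hkle with
      | 0, _ => simpa [iteratedDeriv_zero] using h0
      | 1, _ =>
        rw [iteratedDeriv_one, (iteratedDeriv_sub_id hIo hA).1 0 h0I, hd1]; ring
      | (j+2), hkle =>
        rw [(iteratedDeriv_sub_id hIo hA).2 j 0 h0I]
        exact hk (j+2) (by omega) hkle
    obtain ⟨c, cA, hcz⟩ := hadamard_n ha m (fun x => h x - x) vA hvan
    refine ⟨c, cA, fun z hz => ?_⟩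
    have := hcz z
    rw [hmn] at this
    linarith
  exact ⟨⟨E1, E2⟩, ⟨fun hE => E3 (E1 hE), fun hC => E2 (E4 hC)⟩⟩
end
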